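/- arXiv:2307.04026 — 2 statements merged into one kernel-verified Lean document; each statement's English description precedes it below -/
import Mathlib

section
/- Let f : S → ℝ be a bounded function on the family of closed counterclockwise arcs of S¹ with f of every degenerate arc equal to 0, and suppose that for any x₁, x₂, x₃, x₄ in counterclockwise order on S¹ we have f(arc(x₁,x₃)) + f(arc(x₂,x₄)) ≤ f(arc(x₁,x₄)) + f(arc(x₂,x₃)). For n ≥ 3, define mₙ = inf { Σ_{S∈X} f(S) : X is a tiling of S¹ by n arcs }. Then the sequence {mₙ} is convex, i.e., m_{n-1} + m_{n+1} ≥ 2mₙ for all n ≥ 4. -/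
/-!
Lift near-optimal tilings with `n + 1` and `n - 1` arcs to monotone sequences `P` and `Q` on `ℤ`,
of periods `n + 1` and `n - 1` with shift `2π`. Let `J i` be the index of the arc of `Q` that
contains `P i`; then `i - J i` never rises by more than one and rises by two over a period, so
there are two arcs of `P` lying within arcs of `Q` at which it rises from level `v` to `v + 1`
and from `v + 1` to `v + 2`. Between these two places `P` has exactly one point more than `Q`, and
swapping the two stretches gives two tilings with `n` arcs each. Where the stretches are joined,
an arc of `Q` containing an arc of `P` is replaced by two crossing arcs, so the quadrangle
inequality bounds the total cost of the new tilings by that of `P` and `Q`. Hence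
`2 mₙ ≤ mₙ₋₁ + mₙ₊₁ + ε` for every `ε > 0`.
-/

open Finset

/-- `mseq f n` : the infimum of `∑ f(arcs)` over tilings of the circle by `n` arcs,
where arcs are parametrized by pairs of angles and a tiling by `n` arcs corresponds to a
monotone sequence of `n+1` angles starting at some `x 0` and ending at `x 0 + 2π`. -/
noncomputable def mseq (f : ℝ → ℝ → ℝ) (n : ℕ) : ℝ :=
  sInf {s | ∃ x : Fin (n + 1) → ℝ, Monotone x ∧ x (Fin.last n) = x 0 + 2 * Real.pi ∧
    s = ∑ i : Fin n, f (x i.castSucc) (x i.succ)}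

open Real

noncomputable def arcSum (f : ℝ → ℝ → ℝ) (x : ℤ → ℝ) (a b : ℤ) : ℝ :=
  ∑ i ∈ Ico a b, f (x i) (x (i + 1))

section arcSum

variable {f : ℝ → ℝ → ℝ} {x y : ℤ → ℝ} {a b c : ℤ}

theorem arcSum_add_one : arcSum f x a (a + 1) = f (x a) (x (a + 1)) := by
  simp [arcSum, Ico_add_one_right_eq_Icc]

theorem arcSum_add_arcSum (hab : a ≤ b) (hbc : b ≤ c) :
    arcSum f x a b + arcSum f x b c = arcSum f x a c := by
  rw [arcSum, arcSum, arcSum, ← sum_union (Ico_disjoint_Ico_consecutive a b c),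
    Ico_union_Ico_eq_Ico hab hbc]

theorem arcSum_eq_of_eq_comp_add {d e : ℤ} (h : ∀ i, a ≤ i → i ≤ b → x i = y (i + e))
    (hc : c = a + e) (hd : d = b + e) : arcSum f x a b = arcSum f y c d := by
  rw [arcSum, arcSum, hc, hd, ← sum_Ico_add']
  refine sum_congr rfl fun i hi => ?_
  rw [mem_Ico] at hi
  rw [h i hi.1 hi.2.le, h (i + 1) (by omega) hi.2, add_right_comm]

theorem arcSum_eq_sum_fin (k : ℕ) :
    arcSum f x a (a + k) = ∑ i : Fin k, f (x (a + i)) (x (a + i + 1)) := by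
  have shift := sum_Ico_add' (fun i => f (x i) (x (i + 1))) 0 (k : ℤ) a
  rw [zero_add, add_comm (k : ℤ)] at shift
  rw [arcSum, ← shift, Int.Ico_eq_finset_map, sum_map, Fin.sum_univ_eq_sum_range
    (fun i : ℕ => f (x (a + i)) (x (a + i + 1)))]
  simp [add_comm]

end arcSum

/-- `x` lifts a tiling of the circle by `k` arcs to the universal cover: the arcs are the images
of the intervals `[x i, x (i + 1)]`. -/
def IsLiftedTiling (k : ℕ) (x : ℤ → ℝ) : Prop :=
  Monotone x ∧ ∀ i, x (i + k) = x i + 2 * π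

namespace IsLiftedTiling

variable {k : ℕ} {x : ℤ → ℝ}

theorem add_mul (hx : IsLiftedTiling k x) (i m : ℤ) : x (i + k * m) = x i + 2 * π * m := by
  induction m using Int.induction_on with
  | zero => simp
  | succ m ih =>
    rw [mul_add_one, ← add_assoc, hx.2, ih]
    push_cast
    ring
  | pred m ih =>
    have h := hx.2 (i + k * (-m - 1))
    rw [add_assoc, ← mul_add_one, sub_add_cancel, ih] at h
    push_cast at h ⊢
    linarith

theorem le_add_two_pi (hx : IsLiftedTiling k x) {i j : ℤ} (hj : j ≤ i + k) :
    x j ≤ x i + 2 * π :=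
  hx.2 i ▸ hx.1 hj

theorem exists_le_lt (hx : IsLiftedTiling k x) (r : ℝ) :
    ∃ j, x j ≤ r ∧ r < x (j + 1) := by
  have hπ : 0 < 2 * π := by positivity
  obtain ⟨m, hm⟩ := exists_int_gt ((r - x 0) / (2 * π))
  obtain ⟨m', hm'⟩ := exists_int_lt ((r - x 0) / (2 * π))
  rw [div_lt_iff₀ hπ] at hm
  rw [lt_div_iff₀ hπ] at hm'
  have above : r < x (k * m) := by
    have := hx.add_mul 0 m
    rw [zero_add] at this
    linarith
  have below : x (k * m') ≤ r := by
    have := hx.add_mul 0 m'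
    rw [zero_add] at this
    linarith
  obtain ⟨j, hj, hmax⟩ := Int.exists_greatest_of_bdd
    ⟨k * m, fun z hz => (hx.1.reflect_lt (lt_of_le_of_lt hz above)).le⟩ ⟨k * m', below⟩
  exact ⟨j, hj, lt_of_not_ge fun h => by linarith [hmax (j + 1) h]⟩

theorem arcSum_add_eq (hx : IsLiftedTiling k x) {f : ℝ → ℝ → ℝ}
    (hper : ∀ a b : ℝ, f (a + 2 * π) (b + 2 * π) = f a b) (a b : ℤ) :
    arcSum f x a (a + k) = arcSum f x b (b + k) := by
  have step : ∀ a, arcSum f x (a + 1) (a + 1 + k) = arcSum f x a (a + k) := fun a => by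
    have h₁ := arcSum_add_arcSum (f := f) (x := x) (by omega : a ≤ a + 1)
      (by omega : a + 1 ≤ a + 1 + k)
    have h₂ := arcSum_add_arcSum (f := f) (x := x) (by omega : a ≤ a + k)
      (by omega : a + k ≤ a + k + 1)
    rw [arcSum_add_one] at h₁
    rw [arcSum_add_one, hx.2, show a + k + 1 = a + 1 + k by ring, hx.2, hper] at h₂
    linarith
  have from_zero : ∀ a, arcSum f x a (a + k) = arcSum f x 0 k := fun a => by
    induction a using Int.induction_on with
    | zero => simp
    | succ a ih => rw [step, ih]
    | pred a ih => rw [← ih, ← step, sub_add_cancel]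
  rw [from_zero, from_zero]

end IsLiftedTiling

theorem exists_isLiftedTiling_of_fin {k : ℕ} (hk : 0 < k) {x : Fin (k + 1) → ℝ}
    (hx : Monotone x) (hlast : x (Fin.last k) = x 0 + 2 * π) :
    ∃ X : ℤ → ℝ, IsLiftedTiling k X ∧ ∀ t : Fin (k + 1), X t = x t := by
  let y : ℕ → ℝ := fun r => x ⟨min r k, by omega⟩
  have hy : ∀ r, y r ≤ y (r + 1) := fun r => hx (Fin.mk_le_mk.mpr (by omega))
  have hyk : y k = y 0 + 2 * π := by simpa [y, Fin.last] using hlast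
  let X : ℤ → ℝ := fun i => y (i % k).toNat + 2 * π * (i / k : ℤ)
  have hX : ∀ (q : ℤ) (r : ℕ), r ≤ k → X (k * q + r) = y r + 2 * π * q := by
    intro q r hr
    rcases hr.lt_or_eq with hr | hr
    · obtain ⟨hdiv, hmod⟩ := (Int.ediv_emod_unique (a := k * q + r) (by omega)).mpr
        ⟨add_comm _ _, by omega, by omega⟩
      simp only [X, hdiv, hmod, Int.toNat_natCast]
    · obtain ⟨hdiv, hmod⟩ := (Int.ediv_emod_unique (a := k * q + k) (b := k) (r := 0)
        (q := q + 1) (by omega)).mpr ⟨by ring, le_rfl, by omega⟩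
      rw [hr]
      simp only [X, hdiv, hmod, hyk, Int.toNat_zero]
      push_cast
      ring
  have decomp : ∀ i : ℤ, ∃ (q : ℤ) (r : ℕ), r < k ∧ i = k * q + r := fun i =>
    ⟨i / k, (i % k).toNat, by have := Int.emod_lt_of_pos i (b := k) (by omega); omega,
      by have := Int.emod_nonneg i (b := k) (by omega); have := Int.mul_ediv_add_emod i k; omega⟩
  refine ⟨X, ⟨monotone_int_of_le_succ fun i => ?_, fun i => ?_⟩, fun t => ?_⟩
  · obtain ⟨q, r, hr, rfl⟩ := decomp i
    rw [hX q r hr.le, add_assoc, ← Nat.cast_add_one, hX q (r + 1) hr]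
    linarith [hy r]
  · obtain ⟨q, r, hr, rfl⟩ := decomp i
    rw [hX q r hr.le, show k * q + r + k = k * (q + 1) + r by ring, hX (q + 1) r hr.le]
    push_cast
    ring
  · simpa [y, t.is_le] using hX 0 t t.is_le

def tilingCosts (f : ℝ → ℝ → ℝ) (k : ℕ) : Set ℝ :=
  {s | ∃ x : Fin (k + 1) → ℝ, Monotone x ∧ x (Fin.last k) = x 0 + 2 * π ∧
    s = ∑ i : Fin k, f (x i.castSucc) (x i.succ)}

section tilingCosts

variable {f : ℝ → ℝ → ℝ} {k : ℕ}

theorem arcSum_mem_tilingCosts {x : ℤ → ℝ} (hx : Monotone x) {a : ℤ}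
    (hclose : x (a + k) = x a + 2 * π) : arcSum f x a (a + k) ∈ tilingCosts f k := by
  refine ⟨fun t => x (a + t), fun s t hst => hx (by simpa using hst), by simpa using hclose, ?_⟩
  simp [arcSum_eq_sum_fin, add_assoc]

theorem exists_isLiftedTiling_arcSum_eq (hk : 0 < k) {s : ℝ} (hs : s ∈ tilingCosts f k) :
    ∃ x, IsLiftedTiling k x ∧ arcSum f x 0 k = s := by
  obtain ⟨y, hy, hlast, rfl⟩ := hs
  obtain ⟨x, hx, hxy⟩ := exists_isLiftedTiling_of_fin hk hy hlast
  refine ⟨x, hx, ?_⟩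
  simpa [← hxy] using arcSum_eq_sum_fin (f := f) (x := x) (a := 0) k

theorem bddBelow_tilingCosts
    (hbdd : ∃ B : ℝ, ∀ a b : ℝ, a ≤ b → b ≤ a + 2 * π → |f a b| ≤ B) :
    BddBelow (tilingCosts f k) := by
  obtain ⟨B, hB⟩ := hbdd
  refine ⟨-(k * B), ?_⟩
  rintro s ⟨x, hx, hlast, rfl⟩
  have arc_ge : ∀ i : Fin k, -B ≤ f (x i.castSucc) (x i.succ) := fun i =>
    neg_le_of_abs_le (hB _ _ (hx i.castSucc_le_succ)
      (by linarith [hx (Fin.le_last i.succ), hx (Fin.zero_le i.castSucc)]))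
  calc -(k * B) = ∑ _i : Fin k, -B := by simp
    _ ≤ _ := sum_le_sum fun i _ => arc_ge i

theorem mseq_le_arcSum (hbdd : ∃ B : ℝ, ∀ a b : ℝ, a ≤ b → b ≤ a + 2 * π → |f a b| ≤ B)
    {x : ℤ → ℝ} (hx : Monotone x) {a : ℤ} (hclose : x (a + k) = x a + 2 * π) :
    mseq f k ≤ arcSum f x a (a + k) :=
  csInf_le (bddBelow_tilingCosts hbdd) (arcSum_mem_tilingCosts hx hclose)

theorem exists_isLiftedTiling_arcSum_lt (hk : 0 < k) {ε : ℝ} (hε : 0 < ε) :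
    ∃ x, IsLiftedTiling k x ∧ arcSum f x 0 k < mseq f k + ε := by
  have hne : (tilingCosts f k).Nonempty :=
    ⟨_, arcSum_mem_tilingCosts (x := fun i => 2 * π * i / k) (a := 0)
      (fun i j hij => by dsimp only; gcongr) (by push_cast; field_simp)⟩
  obtain ⟨s, hs, hlt⟩ := Real.lt_sInf_add_pos hne hε
  obtain ⟨x, hx, rfl⟩ := exists_isLiftedTiling_arcSum_eq hk hs
  exact ⟨x, hx, hlt⟩

end tilingCosts

theorem exists_upcrossing {g : ℤ → ℤ} (hg : ∀ i, g (i + 1) ≤ g i + 1) {a b v : ℤ} (hab : a ≤ b)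
    (ha : g a ≤ v) (hb : v < g b) : ∃ i, a ≤ i ∧ i < b ∧ g i = v ∧ g (i + 1) = v + 1 := by
  induction b, hab using Int.leInduction with
  | base => omega
  | succ b hab ih =>
    by_cases h : v < g b
    · obtain ⟨i, hai, hib, hi⟩ := ih h
      exact ⟨i, hai, by omega, hi⟩
    · have := hg b
      exact ⟨b, hab, by omega, by omega, by omega⟩

theorem exists_consecutive_upcrossings {g : ℤ → ℤ} {p : ℤ} (hp : 3 ≤ p)
    (hg : ∀ i, g (i + 1) ≤ g i + 1) (hgp : ∀ i, g (i + p) = g i + 2) :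
    ∃ i₁ i₂, i₁ < i₂ ∧ i₂ ≤ i₁ + p - 2 ∧ g (i₁ + 1) = g i₁ + 1 ∧ g i₂ = g i₁ + 1 ∧
      g (i₂ + 1) = g i₂ + 1 := by
  obtain ⟨i, -, -, hi, hi'⟩ :=
    exists_upcrossing hg (by omega : 0 ≤ p) le_rfl (by have := hgp 0; rw [zero_add] at this; omega)
  obtain ⟨i', hi'₀, hi'₁, hi'₂, hi'₃⟩ :=
    exists_upcrossing hg (by omega : i + 1 ≤ i + p) hi'.le (by rw [hgp]; omega)
  by_cases hclose : i' ≤ i + p - 2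
  · exact ⟨i, i', by omega, hclose, by omega, by omega, by omega⟩
  · -- the upcrossing at `i + p` repeats the one at `i`
    have h₀ := hgp i
    have h₁ := hgp (i + 1)
    rw [add_right_comm] at h₁
    exact ⟨i', i + p, by omega, by omega, by omega, by omega, by omega⟩

def ArcWithin (x : ℤ → ℝ) (i : ℤ) (y : ℤ → ℝ) (j : ℤ) : Prop :=
  y j ≤ x i ∧ x (i + 1) ≤ y (j + 1)

theorem exists_arcWithin_pair {q : ℕ} (hq : 0 < q) {P Q : ℤ → ℝ}
    (hP : IsLiftedTiling (q + 2) P) (hQ : IsLiftedTiling q Q) :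
    ∃ i j L : ℤ, 0 ≤ L ∧ L < q ∧ ArcWithin P i Q j ∧ ArcWithin P (i + L + 1) Q (j + L) := by
  have index_le : ∀ {j j' : ℤ} {r r' : ℝ}, Q j ≤ r → r ≤ r' → r' < Q (j' + 1) → j ≤ j' :=
    fun h₁ h₂ h₃ => Int.lt_add_one_iff.mp (hQ.1.reflect_lt ((h₁.trans h₂).trans_lt h₃))
  choose J hJ using fun i => hQ.exists_le_lt (P i)
  have J_period : ∀ i, J (i + (q + 2 : ℕ)) = J i + q := fun i => by
    have h₁ := (hJ i).1
    have h₂ := (hJ i).2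
    have h₃ := (hJ (i + (q + 2 : ℕ))).1
    have h₄ := (hJ (i + (q + 2 : ℕ))).2
    rw [hP.2] at h₃ h₄
    refine le_antisymm (index_le h₃ le_rfl ?_) (index_le ?_ le_rfl h₄)
    · rw [add_right_comm, hQ.2]
      linarith
    · rw [hQ.2]
      linarith
  have within : ∀ i, J (i + 1) = J i → ArcWithin P i Q (J i) := fun i h =>
    ⟨(hJ i).1, h ▸ (hJ (i + 1)).2.le⟩
  -- `i - J i` rises by one exactly at the arcs of `P` that lie within an arc of `Q`
  obtain ⟨i₁, i₂, hlt, hle, hstep₁, hlevel, hstep₂⟩ := exists_consecutive_upcrossings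
    (g := fun i => i - J i) (p := q + 2) (by omega)
    (fun i => by have := index_le (hJ i).1 (hP.1 (by omega : i ≤ i + 1)) (hJ (i + 1)).2; omega)
    (fun i => by have := J_period i; push_cast at this; omega)
  refine ⟨i₁, J i₁, i₂ - i₁ - 1, by omega, by omega, within i₁ (by omega), ?_⟩
  rw [show i₁ + (i₂ - i₁ - 1) + 1 = i₂ by ring, show J i₁ + (i₂ - i₁ - 1) = J i₂ by omega]
  exact within i₂ (by omega)

/-- `x` up to index `s`, then `y (t + 1), …, y (t + m)`, then `x` from index `u + 1` on. -/
def splice (x : ℤ → ℝ) (s : ℤ) (y : ℤ → ℝ) (t m u : ℤ) : ℤ → ℝ := fun i =>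
  if i ≤ s then x i else if i ≤ s + m then y (i + (t - s)) else x (i + (u - s - m))

section splice

variable {x y : ℤ → ℝ} {s t m u i : ℤ}

theorem splice_of_le (h : i ≤ s) : splice x s y t m u i = x i := if_pos h

theorem splice_of_lt_of_le (h₁ : s < i) (h₂ : i ≤ s + m) :
    splice x s y t m u i = y (i + (t - s)) := by
  simp [splice, not_le.mpr h₁, h₂]

theorem splice_of_lt (hm : 0 ≤ m) (h : s + m < i) :
    splice x s y t m u i = x (i + (u - s - m)) := by
  simp [splice, show ¬i ≤ s by omega, not_le.mpr h]

theorem splice_self (hu : u = s + m) : splice x s x s m u = x := by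
  ext i
  simp only [splice, hu]
  split_ifs <;> ring_nf

theorem monotone_splice (hx : Monotone x) (hy : Monotone y) (hm : 0 ≤ m) (h₁ : x s ≤ y (t + 1))
    (h₂ : y (t + m) ≤ x (u + 1)) (h₃ : x s ≤ x (u + 1)) : Monotone (splice x s y t m u) := by
  have reindex : ∀ {g h : ℤ → ℝ} {a b c d : ℤ}, g a ≤ h b → c = a → d = b → g c ≤ h d := by
    rintro g h a b c d hab rfl rfl
    exact hab
  refine monotone_int_of_le_succ fun i => ?_
  simp only [splice]
  split_ifs <;> first
    | (apply hx; omega)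
    | (apply hy; omega)
    | (apply reindex h₁ <;> omega)
    | (apply reindex h₂ <;> omega)
    | (apply reindex h₃ <;> omega)

theorem arcSum_splice {f : ℝ → ℝ → ℝ} (hm : 0 < m) {b c : ℤ} (hb : s + m + 1 ≤ b)
    (hc : c = b + (u - s - m)) :
    arcSum f (splice x s y t m u) s b = f (x s) (y (t + 1)) + arcSum f y (t + 1) (t + m) +
      f (y (t + m)) (x (u + 1)) + arcSum f x (u + 1) c := by
  rw [← arcSum_add_arcSum (by omega : s ≤ s + 1) (by omega : s + 1 ≤ b),
    ← arcSum_add_arcSum (by omega : s + 1 ≤ s + m) (by omega : s + m ≤ b),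
    ← arcSum_add_arcSum (by omega : s + m ≤ s + m + 1) hb, arcSum_add_one, arcSum_add_one,
    splice_of_le le_rfl, splice_of_lt_of_le (by omega) (by omega),
    splice_of_lt_of_le (by omega) le_rfl, splice_of_lt hm.le (by omega),
    arcSum_eq_of_eq_comp_add (y := y) (e := t - s) (c := t + 1) (d := t + m)
      (fun i h₁ h₂ => splice_of_lt_of_le (by omega) h₂) (by ring) (by ring),
    arcSum_eq_of_eq_comp_add (y := x) (e := u - s - m) (c := u + 1) (d := c)
      (fun i h₁ h₂ => splice_of_lt hm.le (by omega)) (by ring) hc]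
  ring_nf

theorem arcSum_splice_zero {f : ℝ → ℝ → ℝ} {b c : ℤ} (hb : s + 1 ≤ b) (hc : c = b + (u - s)) :
    arcSum f (splice x s y t 0 u) s b = f (x s) (x (u + 1)) + arcSum f x (u + 1) c := by
  rw [← arcSum_add_arcSum (by omega : s ≤ s + 1) hb, arcSum_add_one, splice_of_le le_rfl,
    splice_of_lt le_rfl (by omega),
    arcSum_eq_of_eq_comp_add (y := x) (e := u - s - 0) (c := u + 1) (d := c)
      (fun i h₁ h₂ => splice_of_lt le_rfl (by omega)) (by ring) (by rw [hc]; ring)]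
  ring_nf

end splice

theorem arcSum_splice_add_arcSum_splice_le {f : ℝ → ℝ → ℝ}
    (hineq : ∀ a b c d : ℝ, a ≤ b → b ≤ c → c ≤ d → d ≤ a + 2 * π →
      f a c + f b d ≤ f a d + f b c)
    {q : ℕ} {P Q : ℤ → ℝ} (hP : Monotone P) (hQ : IsLiftedTiling q Q)
    {i j L : ℤ} (hL : 0 ≤ L) (hLq : L < q) (h₁ : ArcWithin P i Q j)
    (h₂ : ArcWithin P (i + L + 1) Q (j + L)) :
    arcSum f (splice P i Q j L (i + L + 1)) i (i + (q + 1)) +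
        arcSum f (splice Q j P i (L + 1) (j + L)) j (j + (q + 1)) ≤
      arcSum f P i (i + (q + 2)) + arcSum f Q j (j + q) := by
  have hQ₁ : Q (j + 1) ≤ Q j + 2 * π := hQ.le_add_two_pi (by omega)
  have hP₁ : P i ≤ P (i + 1) := hP (by omega)
  -- `P` and `Q` are splices of themselves, which decomposes their costs like those of the splices
  have costP := arcSum_splice (f := f) (x := P) (y := P) (s := i) (t := i) (m := L + 1)
    (u := i + L + 1) (b := i + (q + 2)) (c := i + (q + 2)) (by omega) (by omega) (by ring)
  rw [splice_self (by ring)] at costP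
  have costB := arcSum_splice (f := f) (x := Q) (y := P) (s := j) (t := i) (m := L + 1)
    (u := j + L) (b := j + (q + 1)) (c := j + q) (by omega) (by omega) (by ring)
  rcases hL.eq_or_lt with rfl | hL
  · -- no point of `Q` lies between the two arcs of `P`, which share the arc `[Q j, Q (j + 1)]`
    simp only [add_zero, zero_add] at h₂ costP costB ⊢
    have costQ := arcSum_splice_zero (f := f) (x := Q) (y := Q) (s := j) (t := j) (u := j)
      (b := j + q) (c := j + q) (by omega) (by ring)
    rw [splice_self (by ring)] at costQ
    have costA := arcSum_splice_zero (f := f) (x := P) (y := Q) (s := i) (t := j) (u := i + 1)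
      (b := i + (q + 1)) (c := i + (q + 2)) (by omega) (by ring)
    have quad₁ := hineq _ _ _ _ h₁.1 hP₁ h₁.2 hQ₁
    have quad₂ := hineq (P i) (P (i + 1)) (P (i + 1 + 1)) (Q (j + 1)) hP₁ (hP (by omega)) h₂.2
      (by linarith [h₁.1])
    linarith
  · have costQ := arcSum_splice (f := f) (x := Q) (y := Q) (s := j) (t := j) (m := L)
      (u := j + L) (b := j + q) (c := j + q) hL (by omega) (by ring)
    rw [splice_self rfl] at costQ
    have costA := arcSum_splice (f := f) (x := P) (y := Q) (s := i) (t := j) (m := L)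
      (u := i + L + 1) (b := i + (q + 1)) (c := i + (q + 2)) hL (by omega) (by ring)
    have quad₁ := hineq _ _ _ _ h₁.1 hP₁ h₁.2 hQ₁
    have quad₂ := hineq (Q (j + L)) (P (i + (L + 1))) (P (i + L + 1 + 1)) (Q (j + L + 1))
      (by rw [← add_assoc]; exact h₂.1) (hP (by omega)) h₂.2 (hQ.le_add_two_pi (by omega))
    linarith

theorem two_mul_mseq_le_arcSum_add {f : ℝ → ℝ → ℝ}
    (hbdd : ∃ B : ℝ, ∀ a b : ℝ, a ≤ b → b ≤ a + 2 * π → |f a b| ≤ B)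
    (hper : ∀ a b : ℝ, f (a + 2 * π) (b + 2 * π) = f a b)
    (hineq : ∀ a b c d : ℝ, a ≤ b → b ≤ c → c ≤ d → d ≤ a + 2 * π →
      f a c + f b d ≤ f a d + f b c)
    {q : ℕ} (hq : 0 < q) {P Q : ℤ → ℝ} (hP : IsLiftedTiling (q + 2) P)
    (hQ : IsLiftedTiling q Q) :
    2 * mseq f (q + 1) ≤ arcSum f P 0 (q + 2 : ℕ) + arcSum f Q 0 q := by
  obtain ⟨i, j, L, hL, hLq, h₁, h₂⟩ := exists_arcWithin_pair hq hP hQ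
  have hP₁ : P i ≤ P (i + 1) := hP.1 (by omega)
  have hA : mseq f (q + 1) ≤ arcSum f (splice P i Q j L (i + L + 1)) i (i + (q + 1)) := by
    refine mseq_le_arcSum hbdd (monotone_splice hP.1 hQ.1 hL (hP₁.trans h₁.2)
      (h₂.1.trans (hP.1 (by omega))) (hP.1 (by omega))) ?_
    rw [splice_of_le le_rfl, splice_of_lt hL (by omega), ← hP.2]
    push_cast
    ring_nf
  have hB : mseq f (q + 1) ≤ arcSum f (splice Q j P i (L + 1) (j + L)) j (j + (q + 1)) := by
    refine mseq_le_arcSum hbdd (monotone_splice hQ.1 hP.1 (by omega) (h₁.1.trans hP₁)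
      ((hP.1 (by omega)).trans h₂.2) (hQ.1 (by omega))) ?_
    rw [splice_of_le le_rfl, splice_of_lt (by omega) (by omega), ← hQ.2]
    push_cast
    ring_nf
  have windowP := hP.arcSum_add_eq hper i 0
  have windowQ := hQ.arcSum_add_eq hper j 0
  rw [zero_add] at windowP windowQ
  push_cast at windowP windowQ ⊢
  linarith [arcSum_splice_add_arcSum_splice_le hineq hP.1 hQ hL hLq h₁ h₂]

theorem stmt1_general (f : ℝ → ℝ → ℝ)
    (hbdd : ∃ B : ℝ, ∀ a b : ℝ, a ≤ b → b ≤ a + 2 * Real.pi → |f a b| ≤ B)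
    (hper : ∀ a b : ℝ, f (a + 2 * Real.pi) (b + 2 * Real.pi) = f a b)
    (hineq : ∀ a b c d : ℝ, a ≤ b → b ≤ c → c ≤ d → d ≤ a + 2 * Real.pi →
      f a c + f b d ≤ f a d + f b c)
    (n : ℕ) (hn : 4 ≤ n) :
    2 * mseq f n ≤ mseq f (n - 1) + mseq f (n + 1) := by
  obtain ⟨q, rfl⟩ : ∃ q, n = q + 1 := ⟨n - 1, by omega⟩
  have hq : 0 < q := by omega
  refine le_of_forall_pos_le_add fun ε hε => ?_
  obtain ⟨P, hP, hPε⟩ :=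
    exists_isLiftedTiling_arcSum_lt (f := f) (k := q + 2) (by omega) (half_pos hε)
  obtain ⟨Q, hQ, hQε⟩ := exists_isLiftedTiling_arcSum_lt (f := f) hq (half_pos hε)
  have := two_mul_mseq_le_arcSum_add hbdd hper hineq hq hP hQ
  rw [Nat.add_sub_cancel]
  linarith

theorem stmt1 (f : ℝ → ℝ → ℝ)
    (hbdd : ∃ B : ℝ, ∀ a b : ℝ, a ≤ b → b ≤ a + 2 * Real.pi → |f a b| ≤ B)
    (hdeg : ∀ a : ℝ, f a a = 0)
    (hper : ∀ a b : ℝ, f (a + 2 * Real.pi) (b + 2 * Real.pi) = f a b)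
    (hineq : ∀ a b c d : ℝ, a ≤ b → b ≤ c → c ≤ d → d ≤ a + 2 * Real.pi →
      f a c + f b d ≤ f a d + f b c)
    (n : ℕ) (hn : 4 ≤ n) :
    2 * mseq f n ≤ mseq f (n - 1) + mseq f (n + 1) :=
  stmt1_general f hbdd hper hineq n hn
end

section
/- Let C be an o-symmetric convex disk in ℝ² and let x, y ∈ ℝ² with ‖x−y‖_C ≤ 2. Then the C-spindle [x,y]_C is the intersection of at most two translates of C; moreover, if [x,y]_C is itself a translate of C, then ‖x−y‖_C = 2. -/
open Set

noncomputable section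

/-- The plane. -/
abbrev P2 := ℝ × ℝ

/-- The translate of `C` by the vector `x`. -/
def tr (C : Set P2) (x : P2) : Set P2 := (x + ·) '' C

/-- The `C`-spindle of `p` and `q`: the intersection of all translates of `C` containing both
`p` and `q` (equal to all of `ℝ²` if there is no such translate). -/
def spindle (C : Set P2) (p q : P2) : Set P2 :=
  ⋂ x ∈ {x : P2 | p ∈ tr C x ∧ q ∈ tr C x}, tr C x

/-- `K` is `C`-(spindle) convex. -/
def CConvexSet (C K : Set P2) : Prop := ∀ p ∈ K, ∀ q ∈ K, spindle C p q ⊆ K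

/-- `C` is an `o`-symmetric convex disk: compact, convex, with nonempty interior,
symmetric about the origin. -/
def SymDisk (C : Set P2) : Prop :=
  IsCompact C ∧ Convex ℝ C ∧ (interior C).Nonempty ∧ ∀ x ∈ C, -x ∈ C

/-- A convex body (convex disk) in the plane. -/
def ConvBody (K : Set P2) : Prop := IsCompact K ∧ Convex ℝ K ∧ (interior K).Nonempty

/-- Cross product (orientation determinant) of two plane vectors. -/
def detv (a b : P2) : ℝ := a.1 * b.2 - a.2 * b.1

/-- A (cyclic) list of points is in (weak) counterclockwise convex position order. -/
def InConvexOrder {m : ℕ} (v : Fin m → P2) : Prop :=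
  ∀ i j k : Fin m, i < j → j < k → 0 ≤ detv (v j - v i) (v k - v i)

/-- The `C`-perimeter of a set `K`: the supremum of the `C`-perimeters of convex polygons
inscribed in `K`, a polygon being given by a closed cyclic sequence of vertices in
counterclockwise convex position, with side lengths measured by the gauge (Minkowski
functional) of `C`. -/
def CPerim (C K : Set P2) : ℝ :=
  sSup {s | ∃ m : ℕ, ∃ v : Fin (m + 1) → P2, (∀ i, v i ∈ K) ∧ InConvexOrder v ∧
    v (Fin.last m) = v 0 ∧ s = ∑ i : Fin m, gauge C (v i.succ - v i.castSucc)}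

/-- The `C`-length of a curve `γ : [0,1] → ℝ²`: supremum of inscribed polygonal
`‖·‖_C`-lengths. -/
def CLength (C : Set P2) (γ : ℝ → P2) : ℝ :=
  sSup {s | ∃ n : ℕ, ∃ t : Fin (n + 1) → ℝ, Monotone t ∧ t 0 = 0 ∧ t (Fin.last n) = 1 ∧
    s = ∑ i : Fin n, gauge C (γ (t i.succ) - γ (t i.castSucc))}

/-- The set of `C`-lengths of arcs joining `x` and `y` contained in the boundary of some
translate of `C`. -/
def arcSet (C : Set P2) (x y : P2) : Set ℝ :=
  {s | ∃ z : P2, ∃ γ : ℝ → P2, ContinuousOn γ (Icc 0 1) ∧ γ 0 = x ∧ γ 1 = y ∧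
    γ '' Icc 0 1 ⊆ frontier (tr C z) ∧ s = CLength C γ}

/-- The `C`-arc-distance of `x` and `y`. -/
def arcDist (C : Set P2) (x y : P2) : ℝ := sInf (arcSet C x y)

/-- The `C`-convex hull of `X`: the intersection of all translates of `C` containing `X`. -/
def convC (C X : Set P2) : Set P2 := ⋂ x ∈ {x : P2 | X ⊆ tr C x}, tr C x

/-- `Q` is a `C`-`n`-gon: an intersection of `n` translates of `C`. -/
def Cngon (C : Set P2) (n : ℕ) (Q : Set P2) : Prop :=
  ∃ x : Fin n → P2, Q = ⋂ i, tr C (x i)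

/-- `K` is an intersection of translates of `C`. -/
def IsCIntersection (C K : Set P2) : Prop := ∃ T : Set P2, K = ⋂ x ∈ T, tr C x

/-- `â_n^C(K)`: the supremum of the areas of `C`-`n`-gons inscribed in `K`. -/
def ahat (C : Set P2) (n : ℕ) (K : Set P2) : ℝ :=
  sSup {s | ∃ Q : Set P2, Cngon C n Q ∧ Q ⊆ K ∧ s = (MeasureTheory.volume Q).toReal}

/-- `Â_n^C(K)`: the infimum of the areas of `C`-`n`-gons circumscribed about `K`. -/
def Ahat (C : Set P2) (n : ℕ) (K : Set P2) : ℝ :=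
  sInf {s | ∃ Q : Set P2, Cngon C n Q ∧ K ⊆ Q ∧ s = (MeasureTheory.volume Q).toReal}

/-- `p̂_n^C(K)`: the supremum of the `C`-perimeters of `C`-`n`-gons inscribed in `K`. -/
def phat (C : Set P2) (n : ℕ) (K : Set P2) : ℝ :=
  sSup {s | ∃ Q : Set P2, Cngon C n Q ∧ Q ⊆ K ∧ s = CPerim C Q}

/-- `P̂_n^C(K)`: the infimum of the `C`-perimeters of `C`-`n`-gons circumscribed about `K`. -/
def Phat (C : Set P2) (n : ℕ) (K : Set P2) : ℝ :=
  sInf {s | ∃ Q : Set P2, Cngon C n Q ∧ K ⊆ Q ∧ s = CPerim C Q}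

end

/-! The centres of the translates of `C` containing `x` and `y` form the lens
`L = (x + C) ∩ (y + C)`, and `[x,y]_C = (z₁ + C) ∩ (z₂ + C)` as soon as `z₁, z₂ ∈ L` and every
translate of `C` containing `z₁` and `z₂` contains `L`. After a linear change of coordinates
taking `y - x` to `(1, 0)`, the disk is `{(s, t) | |t| ≤ T, -β (-t) ≤ s ≤ β t}` for its concave
right boundary function `β`. Take for `z₁` the right end of the top edge of `L`, at height `e`,
and for `z₂` its reflection in the centre of `L`. The containment then follows from the
four-point inequality `β u + β v ≤ β p + β q` (`u ≤ p, q ≤ v`, `p + q = u + v`) of a concave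
function, together with the fact that the width `β e + β (-e)` equals `1` when `e < T`.
For `x = y` one uses `z₁,₂ = x ∓ c` with `c` an extreme point of `C`.

If `‖x - y‖_C < 2`, then `L` has interior points. A translate of a compact set lies in only one
translate of it, so `[x,y]_C` cannot be a translate of `C`. -/

lemma mem_tr {C : Set P2} {p z : P2} : p ∈ tr C z ↔ p - z ∈ C := by
  constructor
  · rintro ⟨c, hc, rfl⟩
    simpa using hc
  · exact fun h => ⟨p - z, h, add_sub_cancel z p⟩

lemma mem_tr_comm {C : Set P2} (hCs : ∀ c ∈ C, -c ∈ C) {p z : P2} :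
    p ∈ tr C z ↔ z ∈ tr C p := by
  suffices ∀ p z : P2, p ∈ tr C z → z ∈ tr C p from ⟨this p z, this z p⟩
  intro p z h
  rw [mem_tr] at h ⊢
  simpa using hCs _ h

lemma mem_spindle {C : Set P2} {p q r : P2} :
    r ∈ spindle C p q ↔ ∀ z, p ∈ tr C z → q ∈ tr C z → r ∈ tr C z := by
  simp [spindle]

def centers (C : Set P2) (p q : P2) : Set P2 := {z | p ∈ tr C z ∧ q ∈ tr C z}

lemma isCompact_centers {C : Set P2} (hC : IsCompact C) (p q : P2) :
    IsCompact (centers C p q) := by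
  have h : centers C p q = Homeomorph.subLeft p ⁻¹' C ∩ Homeomorph.subLeft q ⁻¹' C :=
    ext fun z => and_congr mem_tr mem_tr
  rw [h]
  exact ((Homeomorph.subLeft p).isCompact_preimage.2 hC).inter_right
    (hC.isClosed.preimage (Homeomorph.subLeft q).continuous)

lemma spindle_subset_tr {C : Set P2} {p q z : P2} (hz : z ∈ centers C p q) :
    spindle C p q ⊆ tr C z :=
  fun _ hr => mem_spindle.1 hr z hz.1 hz.2

lemma add_sub_mem_centers {C : Set P2} (hCs : ∀ c ∈ C, -c ∈ C) {p q z : P2}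
    (hz : z ∈ centers C p q) : p + q - z ∈ centers C p q := by
  obtain ⟨hp, hq⟩ := hz
  rw [mem_tr] at hp hq
  refine ⟨mem_tr.2 ?_, mem_tr.2 ?_⟩
  · rw [show p - (p + q - z) = -(q - z) by abel]
    exact hCs _ hq
  · rw [show q - (p + q - z) = -(p - z) by abel]
    exact hCs _ hp

theorem spindle_eq_inter_of_centers_subset {C : Set P2} (hCs : ∀ c ∈ C, -c ∈ C)
    {p q z₁ z₂ : P2} (h₁ : z₁ ∈ centers C p q) (h₂ : z₂ ∈ centers C p q)
    (h : centers C p q ⊆ spindle C z₁ z₂) : spindle C p q = tr C z₁ ∩ tr C z₂ := by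
  refine Subset.antisymm (subset_inter (spindle_subset_tr h₁) (spindle_subset_tr h₂)) ?_
  rintro r ⟨hr₁, hr₂⟩
  refine mem_spindle.2 fun z hp hq => ?_
  rw [mem_tr_comm hCs] at hr₁ hr₂ ⊢
  exact mem_spindle.1 (h ⟨hp, hq⟩) r hr₁ hr₂

lemma eq_of_tr_subset_tr {C : Set P2} (hC : IsCompact C) (hne : C.Nonempty) {z z' : P2}
    (h : tr C z ⊆ tr C z') : z = z' := by
  set v := z - z'
  have hshift : ∀ c ∈ C, c + v ∈ C := fun c hc => by
    have := mem_tr.1 (h (mem_tr.2 (show z + c - z ∈ C by simpa)))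
    rwa [show z + c - z' = c + v by simp only [v]; abel] at this
  -- shifting a maximiser of `c ↦ ⟪v, c⟫` on `C` by `v` would raise the maximum by `‖v‖²`
  obtain ⟨c₀, hc₀, hmax⟩ := hC.exists_isMaxOn hne
    (show Continuous fun c : P2 => v.1 * c.1 + v.2 * c.2 by fun_prop).continuousOn
  have := hmax (hshift c₀ hc₀)
  simp only [mem_ofPred_eq, Prod.fst_add, Prod.snd_add] at this
  have h1 : v.1 = 0 := by nlinarith [sq_nonneg v.1, sq_nonneg v.2]
  have h2 : v.2 = 0 := by nlinarith [sq_nonneg v.1, sq_nonneg v.2]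
  exact sub_eq_zero.1 (Prod.ext h1 h2)

section Transport

variable {C K : Set P2} (f : P2 ≃ P2)

lemma image_tr (hf : ∀ p z, f p ∈ tr K (f z) ↔ p ∈ tr C z) (z : P2) :
    f '' tr C z = tr K (f z) := by
  ext r
  obtain ⟨r, rfl⟩ := f.surjective r
  rw [f.injective.mem_set_image, hf]

lemma image_spindle (hf : ∀ p z, f p ∈ tr K (f z) ↔ p ∈ tr C z) (p q : P2) :
    f '' spindle C p q = spindle K (f p) (f q) := by
  ext r
  obtain ⟨r, rfl⟩ := f.surjective r
  rw [f.injective.mem_set_image, mem_spindle, mem_spindle]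
  constructor
  · intro h z
    obtain ⟨z, rfl⟩ := f.surjective z
    simpa only [hf] using h z
  · intro h z
    simpa only [hf] using h (f z)

lemma spindle_eq_inter_of_equiv (hf : ∀ p z, f p ∈ tr K (f z) ↔ p ∈ tr C z) {p q z₁ z₂ : P2}
    (h : spindle K (f p) (f q) = tr K z₁ ∩ tr K z₂) :
    spindle C p q = tr C (f.symm z₁) ∩ tr C (f.symm z₂) := by
  apply f.injective.image_injective
  rw [image_spindle f hf, image_inter f.injective, image_tr f hf, image_tr f hf,
    f.apply_symm_apply, f.apply_symm_apply, h]

end Transport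

theorem ConcaveOn.add_le_add_of_add_eq {s : Set ℝ} {f : ℝ → ℝ} (hf : ConcaveOn ℝ s f)
    {u v p q : ℝ} (hu : u ∈ s) (hv : v ∈ s) (hp : p ∈ Icc u v) (hpq : p + q = u + v) :
    f u + f v ≤ f p + f q := by
  rcases hp.1.eq_or_lt with rfl | hup
  · rw [add_left_cancel hpq]
  have hvu : 0 < v - u := by linarith [hp.2]
  set μ := (v - p) / (v - u) with hμ
  have hμ0 : 0 ≤ μ := div_nonneg (by linarith [hp.2]) hvu.le
  have hμ1 : 0 ≤ 1 - μ := by rw [hμ, one_sub_div hvu.ne']; exact div_nonneg (by linarith) hvu.le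
  have hp' : μ * u + (1 - μ) * v = p := by rw [hμ]; field_simp; ring
  have hq' : (1 - μ) * u + μ * v = q := by linear_combination -hp' - hpq
  have hfp := hf.2 hu hv hμ0 hμ1 (add_sub_cancel μ 1)
  have hfq := hf.2 hu hv hμ1 hμ0 (sub_add_cancel 1 μ)
  simp only [smul_eq_mul, hp', hq'] at hfp hfq
  linarith

noncomputable def sliceSup (K : Set P2) (t : ℝ) : ℝ := sSup {s | (s, t) ∈ K}

noncomputable def heightSup (K : Set P2) : ℝ := sSup (Prod.snd '' K)

section Slices

variable {K : Set P2}

lemma bddAbove_slice (hKc : IsCompact K) (t : ℝ) : BddAbove {s | (s, t) ∈ K} :=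
  (hKc.image continuous_fst).bddAbove.mono fun s (hs : (s, t) ∈ K) =>
    (⟨(s, t), hs, rfl⟩ : s ∈ Prod.fst '' K)

lemma le_sliceSup (hKc : IsCompact K) {s t : ℝ} (h : (s, t) ∈ K) : s ≤ sliceSup K t :=
  le_csSup (bddAbove_slice hKc t) h

lemma abs_le_heightSup (hKc : IsCompact K) (hKs : ∀ c ∈ K, -c ∈ K) {c : P2} (hc : c ∈ K) :
    |c.2| ≤ heightSup K := by
  have hbdd := (hKc.image continuous_snd).bddAbove
  have hneg : -c.2 ≤ heightSup K := le_csSup hbdd ⟨-c, hKs c hc, rfl⟩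
  exact abs_le.2 ⟨by linarith, le_csSup hbdd ⟨c, hc, rfl⟩⟩

lemma convex_slice (hKv : Convex ℝ K) (t : ℝ) : Convex ℝ {s | (s, t) ∈ K} := by
  intro a ha b hb μ ν hμ hν hμν
  simpa [← add_mul, hμν] using hKv ha hb hμ hν hμν

lemma sliceSup_mem (hKc : IsCompact K) (hKv : Convex ℝ K) (hKs : ∀ c ∈ K, -c ∈ K)
    (hK : K.Nonempty) {t : ℝ} (ht : |t| ≤ heightSup K) : (sliceSup K t, t) ∈ K := by
  have hI : IsCompact (Prod.snd '' K) := hKc.image continuous_snd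
  obtain ⟨c, hc, hcT⟩ : heightSup K ∈ Prod.snd '' K := hI.sSup_mem (hK.image _)
  have hIv : Convex ℝ (Prod.snd '' K) := hKv.linear_image (LinearMap.snd ℝ ℝ ℝ)
  obtain ⟨d, hd, rfl⟩ : t ∈ Prod.snd '' K :=
    hIv.ordConnected.out ⟨-c, hKs c hc, by simp [hcT]⟩ ⟨c, hc, hcT⟩ (abs_le.1 ht)
  exact (hKc.isClosed.preimage (Continuous.prodMk_left d.2)).csSup_mem ⟨d.1, hd⟩
    (bddAbove_slice hKc d.2)

lemma mem_iff_sliceSup (hKc : IsCompact K) (hKv : Convex ℝ K) (hKs : ∀ c ∈ K, -c ∈ K)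
    (hK : K.Nonempty) {c : P2} :
    c ∈ K ↔ |c.2| ≤ heightSup K ∧ -sliceSup K (-c.2) ≤ c.1 ∧ c.1 ≤ sliceSup K c.2 := by
  obtain ⟨s, t⟩ := c
  constructor
  · intro h
    have hneg : -s ≤ sliceSup K (-t) := le_sliceSup hKc (by simpa using hKs _ h)
    exact ⟨abs_le_heightSup hKc hKs h, by linarith, le_sliceSup hKc h⟩
  · rintro ⟨ht, hl, hr⟩
    have hlow : (-sliceSup K (-t), t) ∈ K := by
      simpa using hKs _ (sliceSup_mem hKc hKv hKs hK (t := -t) (by rwa [abs_neg]))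
    exact (convex_slice hKv t).ordConnected.out hlow (sliceSup_mem hKc hKv hKs hK ht) ⟨hl, hr⟩

lemma concaveOn_sliceSup (hKc : IsCompact K) (hKv : Convex ℝ K) (hKs : ∀ c ∈ K, -c ∈ K)
    (hK : K.Nonempty) : ConcaveOn ℝ (Icc (-heightSup K) (heightSup K)) (sliceSup K) := by
  refine ⟨convex_Icc _ _, fun a ha b hb μ ν hμ hν hμν => le_sliceSup hKc ?_⟩
  simpa using hKv (sliceSup_mem hKc hKv hKs hK (abs_le.2 ha))
    (sliceSup_mem hKc hKv hKs hK (abs_le.2 hb)) hμ hν hμν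

end Slices

namespace SymDisk

variable {C : Set P2}

lemma zero_mem_interior (hC : SymDisk C) : (0 : P2) ∈ interior C := by
  obtain ⟨p, hp⟩ := hC.2.2.1
  simpa using hC.2.1.combo_interior_closure_mem_interior hp
    (subset_closure (hC.2.2.2 _ (interior_subset hp))) (by norm_num : (0 : ℝ) < 2⁻¹)
    (by norm_num : (0 : ℝ) ≤ 2⁻¹) (by norm_num)

lemma half_smul_mem (hC : SymDisk C) {v : P2} (h : gauge C v ≤ 2) : (2⁻¹ : ℝ) • v ∈ C := by
  rw [← hC.1.isClosed.closure_eq, ← gauge_le_one_iff_mem_closure hC.2.1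
    (mem_interior_iff_mem_nhds.1 hC.zero_mem_interior), gauge_smul_of_nonneg (by norm_num),
    smul_eq_mul]
  linarith

lemma half_smul_mem_interior (hC : SymDisk C) {v : P2} (h : gauge C v < 2) :
    (2⁻¹ : ℝ) • v ∈ interior C := by
  rw [← gauge_lt_one_iff_mem_interior hC.2.1 (mem_interior_iff_mem_nhds.1 hC.zero_mem_interior),
    gauge_smul_of_nonneg (by norm_num), smul_eq_mul]
  linarith

end SymDisk

noncomputable def lensHeight (K : Set P2) : ℝ := sSup (Prod.snd '' centers K 0 (1, 0))

noncomputable def lensTop (K : Set P2) : P2 := (sliceSup K (lensHeight K), lensHeight K)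

section Lens

variable {K : Set P2}

lemma mem_centers_iff (hKc : IsCompact K) (hKv : Convex ℝ K) (hKs : ∀ c ∈ K, -c ∈ K)
    (hK : K.Nonempty) {z : P2} : z ∈ centers K 0 (1, 0) ↔
      |z.2| ≤ heightSup K ∧ 1 - sliceSup K (-z.2) ≤ z.1 ∧ z.1 ≤ sliceSup K z.2 := by
  simp only [centers, mem_ofPred_eq, mem_tr, mem_iff_sliceSup hKc hKv hKs hK, zero_sub,
    Prod.fst_neg, Prod.snd_neg, Prod.fst_sub, Prod.snd_sub, neg_neg, abs_neg]
  constructor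
  · rintro ⟨⟨ht, h₁, -⟩, -, -, h₂⟩
    exact ⟨ht, by linarith, by linarith⟩
  · rintro ⟨ht, h₁, h₂⟩
    exact ⟨⟨ht, by linarith, by linarith⟩, ht, by linarith, by linarith⟩

lemma half_mem_centers (hKs : ∀ c ∈ K, -c ∈ K) (h0 : ((2⁻¹ : ℝ), (0 : ℝ)) ∈ K) :
    ((2⁻¹ : ℝ), (0 : ℝ)) ∈ centers K 0 (1, 0) := by
  refine ⟨mem_tr.2 ?_, mem_tr.2 ?_⟩
  · simpa using hKs _ h0
  · convert h0 using 1
    ext <;> norm_num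

lemma lensTop_mem_centers (hKc : IsCompact K) (hKv : Convex ℝ K) (hKs : ∀ c ∈ K, -c ∈ K)
    (h0 : ((2⁻¹ : ℝ), (0 : ℝ)) ∈ K) : lensTop K ∈ centers K 0 (1, 0) := by
  obtain ⟨z, hz, hze⟩ := ((isCompact_centers hKc 0 (1, 0)).image continuous_snd).sSup_mem
    ⟨_, mem_image_of_mem _ (half_mem_centers hKs h0)⟩
  rw [mem_centers_iff hKc hKv hKs ⟨_, h0⟩] at hz ⊢
  simp only [lensTop, lensHeight, ← hze] at hz ⊢
  exact ⟨hz.1, hz.2.1.trans hz.2.2, le_rfl⟩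

lemma abs_le_lensHeight (hKc : IsCompact K) (hKs : ∀ c ∈ K, -c ∈ K) {z : P2}
    (hz : z ∈ centers K 0 (1, 0)) : |z.2| ≤ lensHeight K := by
  have hbdd := ((isCompact_centers hKc 0 (1, 0)).image continuous_snd).bddAbove
  have hneg : (0 + (1, 0) - z).2 ≤ lensHeight K :=
    le_csSup hbdd (mem_image_of_mem _ (add_sub_mem_centers hKs hz))
  simp only [zero_add, Prod.snd_sub, zero_sub] at hneg
  exact abs_le.2 ⟨by linarith, le_csSup hbdd (mem_image_of_mem _ hz)⟩

lemma width_lensHeight_le (hKc : IsCompact K) (hKv : Convex ℝ K) (hKs : ∀ c ∈ K, -c ∈ K)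
    (h0 : ((2⁻¹ : ℝ), (0 : ℝ)) ∈ K) (he : lensHeight K < heightSup K) :
    sliceSup K (lensHeight K) + sliceSup K (-lensHeight K) ≤ 1 := by
  have hK : K.Nonempty := ⟨_, h0⟩
  have hβ := concaveOn_sliceSup hKc hKv hKs hK
  set e := lensHeight K
  set T := heightSup K
  set β := sliceSup K
  have htop := (mem_centers_iff hKc hKv hKs hK).1 (lensTop_mem_centers hKc hKv hKs h0)
  simp only [lensTop] at htop
  have heT := abs_le.1 htop.1
  have hT0 : 0 ≤ T := (abs_nonneg _).trans htop.1
  have hTT : (β T, T) ∈ K := sliceSup_mem hKc hKv hKs hK (by rw [abs_of_nonneg hT0])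
  have hwT : 0 ≤ β T + β (-T) := by
    linarith [((mem_iff_sliceSup hKc hKv hKs hK).1 hTT).2.1]
  by_contra! hW
  -- with `μ = 1 / width(e)`, `t = μ e + (1 - μ) T` lies above `e`, yet concavity keeps the
  -- width at height `t` at least `1`
  set μ := (β e + β (-e))⁻¹
  have hμ0 : 0 ≤ μ := inv_nonneg.2 (by linarith)
  have hμ1 : 0 < 1 - μ := sub_pos.2 (inv_lt_one_of_one_lt₀ hW)
  have hμW : μ * (β e + β (-e)) = 1 := inv_mul_cancel₀ (by linarith)
  have h₁ := hβ.2 ⟨heT.1, heT.2⟩ ⟨by linarith, le_rfl⟩ hμ0 hμ1.le (add_sub_cancel μ 1)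
  have h₂ := hβ.2 (x := -e) (y := -T) ⟨by linarith, by linarith⟩ ⟨le_rfl, by linarith⟩
    hμ0 hμ1.le (add_sub_cancel μ 1)
  set t := μ * e + (1 - μ) * T
  simp only [smul_eq_mul, show μ * -e + (1 - μ) * -T = -t by ring] at h₁ h₂
  have hte : e < t := by nlinarith
  have hmem : (β t, t) ∈ centers K 0 (1, 0) := by
    refine (mem_centers_iff hKc hKv hKs hK).2 ⟨abs_le.2 ⟨by nlinarith, by nlinarith⟩, ?_, le_rfl⟩
    nlinarith [mul_nonneg hμ1.le hwT]
  linarith [(abs_le.1 (abs_le_lensHeight hKc hKs hmem)).2]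

lemma fst_sub_le_sliceSup (hKc : IsCompact K) (hKv : Convex ℝ K) (hKs : ∀ c ∈ K, -c ∈ K)
    (h0 : ((2⁻¹ : ℝ), (0 : ℝ)) ∈ K) {z κ : P2} (hz : z ∈ centers K 0 (1, 0))
    (h₁ : lensTop K - κ ∈ K) (h₂ : (1, 0) - lensTop K - κ ∈ K) :
    (z - κ).1 ≤ sliceSup K (z - κ).2 := by
  have hK : K.Nonempty := ⟨_, h0⟩
  have hβ := concaveOn_sliceSup hKc hKv hKs hK
  have hu := abs_le.1 (abs_le_lensHeight hKc hKs hz)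
  have hzK := ((mem_centers_iff hKc hKv hKs hK).1 hz).2.2
  have heT := abs_le.1 ((mem_centers_iff hKc hKv hKs hK).1 (lensTop_mem_centers hKc hKv hKs h0)).1
  rw [mem_iff_sliceSup hKc hKv hKs hK] at h₁ h₂
  simp only [lensTop, Prod.fst_sub, Prod.snd_sub, zero_sub] at h₁ h₂ heT ⊢
  obtain ⟨hb₁, -, hs₁⟩ := h₁
  obtain ⟨hb₂, -, hs₂⟩ := h₂
  rw [abs_le] at hb₁ hb₂
  rcases le_or_gt κ.2 0 with hκ | hκ
  · have := hβ.add_le_add_of_add_eq (u := z.2) (v := lensHeight K - κ.2) (p := lensHeight K)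
      (q := z.2 - κ.2) ⟨by linarith, by linarith⟩ hb₁ ⟨hu.2, by linarith⟩ (by ring)
    linarith
  · have hw := width_lensHeight_le hKc hKv hKs h0 (by linarith)
    have := hβ.add_le_add_of_add_eq (u := -lensHeight K - κ.2) (v := z.2) (p := -lensHeight K)
      (q := z.2 - κ.2) hb₂ ⟨by linarith, by linarith⟩ ⟨by linarith, hu.1⟩ (by ring)
    linarith

lemma centers_subset_spindle (hKc : IsCompact K) (hKv : Convex ℝ K) (hKs : ∀ c ∈ K, -c ∈ K)
    (h0 : ((2⁻¹ : ℝ), (0 : ℝ)) ∈ K) :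
    centers K 0 (1, 0) ⊆ spindle K (lensTop K) ((1, 0) - lensTop K) := by
  intro z hz
  refine mem_spindle.2 fun κ h₁ h₂ => ?_
  rw [mem_tr] at h₁ h₂ ⊢
  have hupper := fst_sub_le_sliceSup hKc hKv hKs h0 hz h₁ h₂
  -- the reflection `w ↦ (1, 0) - w` swaps the two vertices and turns the upper bound into the lower
  have hlower := fst_sub_le_sliceSup hKc hKv hKs h0 (κ := (1, 0) - κ)
    (by simpa using add_sub_mem_centers hKs hz)
    (by simpa [show lensTop K - ((1, 0) - κ) = -((1, 0) - lensTop K - κ) by abel] using hKs _ h₂)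
    (by simpa [show (1, 0) - lensTop K - ((1, 0) - κ) = -(lensTop K - κ) by abel] using hKs _ h₁)
  rw [show (1, 0) - z - ((1, 0) - κ) = -(z - κ) by abel, Prod.fst_neg, Prod.snd_neg] at hlower
  have hK : K.Nonempty := ⟨_, h0⟩
  have hu := abs_le.1 (abs_le_lensHeight hKc hKs hz)
  have hb₁ := abs_le.1 ((mem_iff_sliceSup hKc hKv hKs hK).1 h₁).1
  have hb₂ := abs_le.1 ((mem_iff_sliceSup hKc hKv hKs hK).1 h₂).1
  simp only [lensTop, Prod.snd_sub, zero_sub] at hb₁ hb₂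
  refine (mem_iff_sliceSup hKc hKv hKs hK).2 ⟨abs_le.2 ⟨?_, ?_⟩, by linarith, hupper⟩ <;>
    simp only [Prod.snd_sub] <;> linarith

theorem spindle_zero_eq_inter (hKc : IsCompact K) (hKv : Convex ℝ K) (hKs : ∀ c ∈ K, -c ∈ K)
    (h0 : ((2⁻¹ : ℝ), (0 : ℝ)) ∈ K) :
    spindle K 0 (1, 0) = tr K (lensTop K) ∩ tr K ((1, 0) - lensTop K) := by
  have htop := lensTop_mem_centers hKc hKv hKs h0
  exact spindle_eq_inter_of_centers_subset hKs htop
    (by simpa using add_sub_mem_centers hKs htop) (centers_subset_spindle hKc hKv hKs h0)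

end Lens

theorem exists_spindle_self_eq_inter {C : Set P2} (hC : SymDisk C) (x : P2) :
    ∃ z₁ z₂ : P2, spindle C x x = tr C z₁ ∩ tr C z₂ := by
  obtain ⟨e, he⟩ := hC.1.extremePoints_nonempty ⟨0, interior_subset hC.zero_mem_interior⟩
  have hc₁ : x - e ∈ centers C x x := by
    have : x ∈ tr C (x - e) := mem_tr.2 (by simpa using he.1)
    exact ⟨this, this⟩
  have hc₂ : x + e ∈ centers C x x := by
    have : x ∈ tr C (x + e) := mem_tr.2 (by simpa using hC.2.2.2 _ he.1)
    exact ⟨this, this⟩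
  refine ⟨_, _, spindle_eq_inter_of_centers_subset hC.2.2.2 hc₁ hc₂ fun z hz => ?_⟩
  refine mem_spindle.2 fun κ h₁ h₂ => ?_
  rw [mem_tr] at h₁ h₂
  have hmid : e ∈ openSegment ℝ (x + e - κ) (-(x - e - κ)) :=
    ⟨2⁻¹, 2⁻¹, by norm_num, by norm_num, by norm_num, by module⟩
  have hκ : κ = x := by
    have := (mem_extremePoints_iff_left.1 he).2 _ h₂ _ (hC.2.2.2 _ h₁) hmid
    rwa [sub_eq_iff_eq_add, add_comm, add_right_inj, eq_comm] at this
  rw [hκ, ← mem_tr_comm hC.2.2.2]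
  exact hz.1

theorem not_exists_spindle_eq_tr {C : Set P2} (hC : SymDisk C) {x y : P2}
    (h : gauge C (x - y) < 2) : ¬∃ z : P2, spindle C x y = tr C z := by
  rintro ⟨z, hz⟩
  set U := {w : P2 | x - w ∈ interior C ∧ y - w ∈ interior C}
  have hUo : IsOpen U :=
    (isOpen_interior.preimage (by fun_prop)).inter (isOpen_interior.preimage (by fun_prop))
  have hm : (2⁻¹ : ℝ) • (x + y) ∈ U := by
    refine ⟨?_, ?_⟩
    · rw [show x - (2⁻¹ : ℝ) • (x + y) = (2⁻¹ : ℝ) • (x - y) by module]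
      exact hC.half_smul_mem_interior h
    · rw [show y - (2⁻¹ : ℝ) • (x + y) = (2⁻¹ : ℝ) • -(x - y) by module]
      exact hC.half_smul_mem_interior (by rwa [gauge_neg hC.2.2.2])
  have hUz : U ⊆ {z} := fun w hw =>
    (eq_of_tr_subset_tr hC.1 ⟨0, interior_subset hC.zero_mem_interior⟩ (hz ▸ spindle_subset_tr
      ⟨mem_tr.2 (interior_subset hw.1), mem_tr.2 (interior_subset hw.2)⟩)).symm
  simpa [interior_singleton] using interior_maximal hUz hUo hm

theorem exists_spindle_eq_inter {C : Set P2} (hC : SymDisk C) {x y : P2}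
    (h : gauge C (x - y) ≤ 2) (hxy : x ≠ y) :
    ∃ z₁ z₂ : P2, spindle C x y = tr C z₁ ∩ tr C z₂ := by
  obtain ⟨A, hA⟩ := SeparatingDual.exists_continuousLinearEquiv_apply_eq (R := ℝ)
    (sub_ne_zero.2 hxy.symm) (show ((1, 0) : P2) ≠ 0 by simp)
  let f : P2 ≃ P2 := (Equiv.subRight x).trans A.toEquiv
  have hfA : ∀ p, f p = A (p - x) := fun _ => rfl
  have hf : ∀ p z, f p ∈ tr (A '' C) (f z) ↔ p ∈ tr C z := fun p z => by
    rw [mem_tr, mem_tr, hfA, hfA, ← map_sub, sub_sub_sub_cancel_right, A.injective.mem_set_image]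
  have h0 : ((2⁻¹ : ℝ), (0 : ℝ)) ∈ A '' C :=
    ⟨(2⁻¹ : ℝ) • (y - x), hC.half_smul_mem (by rwa [← neg_sub, gauge_neg hC.2.2.2] at h),
      by simp [hA]⟩
  have hKs : ∀ c ∈ A '' C, -c ∈ A '' C := by
    rintro _ ⟨c, hc, rfl⟩
    exact ⟨-c, hC.2.2.2 c hc, map_neg A c⟩
  have hspindle := spindle_zero_eq_inter (hC.1.image A.continuous)
    (hC.2.1.linear_image A.toLinearMap) hKs h0
  exact ⟨_, _, spindle_eq_inter_of_equiv f hf (by rwa [hfA, hfA, sub_self, map_zero, hA])⟩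

theorem stmt9 (C : Set P2) (hC : SymDisk C) (x y : P2) (h : gauge C (x - y) ≤ 2) :
    (∃ z₁ z₂ : P2, spindle C x y = tr C z₁ ∩ tr C z₂) ∧
      ((∃ z : P2, spindle C x y = tr C z) → gauge C (x - y) = 2) := by
  refine ⟨?_, fun hz => h.eq_of_not_lt fun hlt => not_exists_spindle_eq_tr hC hlt hz⟩
  rcases eq_or_ne x y with rfl | hxy
  · exact exists_spindle_self_eq_inter hC x
  · exact exists_spindle_eq_inter hC h hxy
end
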